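/- Let X be a complex Banach space, let V = X* with dim V ≥ 2, and let f ∈ V* be a nonzero w*-continuous functional with ‖f‖ ≤ 1. Equip V with the product a b := f(a)·b, making V a dual Banach algebra V_f with predual X. Then V_f is weakly Connes amenable. -/

import Mathlib

noncomputable section

open Filter Topology

universe u

/-- The locally convex topology on `A` induced by a pairing `p : A → X → ℂ`,
i.e. the initial topology for the family of maps `a ↦ p a x`, `x : X`. -/
def topOfPairing {A X : Type*} (p : A → X → ℂ) : TopologicalSpace A :=
  TopologicalSpace.induced p Pi.topologicalSpace

theorem continuous_topOfPairing_iff {B A X : Type*} {tB : TopologicalSpace B}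
    {p : A → X → ℂ} {f : B → A} :
    Continuous[tB, topOfPairing p] f ↔
      ∀ x, Continuous[tB, inferInstance] fun b => p (f b) x := by
  rw [topOfPairing, continuous_induced_rng, continuous_pi_iff]
  exact Iff.rfl

theorem topOfPairing_eval_cont {A X : Type*} (p : A → X → ℂ) (x : X) :
    Continuous[topOfPairing p, inferInstance] fun a => p a x :=
  continuous_topOfPairing_iff.1 (@continuous_id _ (topOfPairing p)) x

/-- The weak topology `σ(E, E*)` on a normed space `E`. -/
def weakTop (E : Type u) [NormedAddCommGroup E] [NormedSpace ℂ E] : TopologicalSpace E :=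
  topOfPairing fun x (φ : E →L[ℂ] ℂ) => φ x

/-- The weak-* topology `σ(E*, E)` on the dual of a normed space `E`. -/
def wstarD (E : Type u) [NormedAddCommGroup E] [NormedSpace ℂ E] :
    TopologicalSpace (E →L[ℂ] ℂ) :=
  topOfPairing fun Λ (x : E) => Λ x

section Core

variable {A X : Type u} [NormedAddCommGroup A] [NormedSpace ℂ A]
  [NormedAddCommGroup X] [NormedSpace ℂ X]

/-- The weak-* topology `σ(A, X)` on a dual Banach space `A`, where the duality with the
predual `X` is implemented by an isometric linear isomorphism `ρ : A ≅ X*`. -/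
def wstar (ρ : A ≃ₗᵢ[ℂ] (X →L[ℂ] ℂ)) : TopologicalSpace A :=
  topOfPairing fun a (x : X) => ρ a x

theorem weakTop_cont_iff {B : Type*} {tB : TopologicalSpace B} {E : Type u}
    [NormedAddCommGroup E] [NormedSpace ℂ E] {f : B → E} :
    Continuous[tB, weakTop E] f ↔
      ∀ φ : E →L[ℂ] ℂ, Continuous[tB, inferInstance] fun b => φ (f b) :=
  continuous_topOfPairing_iff

namespace WeakCont

variable {B : Type*} {E F : Type u} [NormedAddCommGroup E] [NormedSpace ℂ E]
  [NormedAddCommGroup F] [NormedSpace ℂ F]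

theorem clm_comp (tB : TopologicalSpace B) (L : E →L[ℂ] F) {f : B → E}
    (hf : Continuous[tB, weakTop E] f) : Continuous[tB, weakTop F] fun b => L (f b) :=
  weakTop_cont_iff.2 fun φ => weakTop_cont_iff.1 hf (φ.comp L)

theorem add (tB : TopologicalSpace B) {f g : B → E} (hf : Continuous[tB, weakTop E] f)
    (hg : Continuous[tB, weakTop E] g) : Continuous[tB, weakTop E] fun b => f b + g b := by
  refine weakTop_cont_iff.2 fun φ => ?_
  letI := tB
  simp only [map_add]
  exact (weakTop_cont_iff.1 hf φ).add (weakTop_cont_iff.1 hg φ)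

theorem const_smul (tB : TopologicalSpace B) {f : B → E} (hf : Continuous[tB, weakTop E] f)
    (c : ℂ) : Continuous[tB, weakTop E] fun b => c • f b := by
  refine weakTop_cont_iff.2 fun φ => ?_
  letI := tB
  simp only [map_smul, smul_eq_mul]
  exact (weakTop_cont_iff.1 hf φ).const_smul c

theorem zero (tB : TopologicalSpace B) :
    Continuous[tB, weakTop E] fun _ : B => (0 : E) := by
  refine weakTop_cont_iff.2 fun φ => ?_
  letI := tB
  simpa using (continuous_const : Continuous fun _ : B => (0 : ℂ))

end WeakCont

/-- A Banach algebra structure on a normed space `A`: an associative continuous bilinear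
multiplication satisfying `‖a * b‖ ≤ ‖a‖ * ‖b‖`. -/
structure BanachAlgStr (A : Type u) [NormedAddCommGroup A] [NormedSpace ℂ A] where
  mul : A →L[ℂ] A →L[ℂ] A
  mul_assoc : ∀ a b c, mul (mul a b) c = mul a (mul b c)
  norm_mul_le : ∀ a b, ‖mul a b‖ ≤ ‖a‖ * ‖b‖

/-- `A`, with predual `X` (via `ρ`) and multiplication `S`, is a dual Banach algebra:
the multiplication is separately continuous for the weak-* topology `σ(A, X)`. -/
structure IsDualBanachAlgebra (ρ : A ≃ₗᵢ[ℂ] (X →L[ℂ] ℂ)) (S : BanachAlgStr A) : Prop where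
  mul_left : ∀ a, Continuous[wstar ρ, wstar ρ] fun b => S.mul a b
  mul_right : ∀ a, Continuous[wstar ρ, wstar ρ] fun b => S.mul b a

/-- A Banach `A`-bimodule structure (for the Banach algebra `(A, S)`) on a normed space `E`:
continuous bilinear left and right actions `l`, `r` which commute and are associative
for the multiplication `S.mul`. -/
structure BanachBimodule {A : Type u} [NormedAddCommGroup A] [NormedSpace ℂ A]
    (S : BanachAlgStr A) (E : Type u) [NormedAddCommGroup E] [NormedSpace ℂ E] where
  l : A →L[ℂ] E →L[ℂ] E
  r : A →L[ℂ] E →L[ℂ] E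
  l_mul : ∀ a b x, l (S.mul a b) x = l a (l b x)
  r_mul : ∀ a b x, r (S.mul a b) x = r b (r a x)
  lr_comm : ∀ a b x, l a (r b x) = r b (l a x)

/-- `A` as a Banach bimodule over itself, via multiplication. -/
def BanachAlgStr.toBimodule (S : BanachAlgStr A) : BanachBimodule S A where
  l := S.mul
  r := S.mul.flip
  l_mul := fun a b x => S.mul_assoc a b x
  r_mul := fun a b x => (S.mul_assoc x a b).symm
  lr_comm := fun a b x => (S.mul_assoc a x b).symm

variable {E : Type u} [NormedAddCommGroup E] [NormedSpace ℂ E]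

/-- `σwc(E)`: the set of `x ∈ E` such that the maps `a ↦ a · x` and `a ↦ x · a` are
continuous from the weak-* topology on `A` into the weak topology on `E`.
It is a (closed) linear subspace of `E`. -/
def sigmaWC (ρ : A ≃ₗᵢ[ℂ] (X →L[ℂ] ℂ)) {S : BanachAlgStr A} (M : BanachBimodule S E) :
    Submodule ℂ E where
  carrier := {x | Continuous[wstar ρ, weakTop E] (fun a => M.l a x) ∧
    Continuous[wstar ρ, weakTop E] fun a => M.r a x}
  add_mem' := by
    rintro x y ⟨h1, h2⟩ ⟨h3, h4⟩
    constructor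
    · simp only [map_add]
      exact WeakCont.add _ h1 h3
    · simp only [map_add]
      exact WeakCont.add _ h2 h4
  zero_mem' := by
    constructor
    · simp only [map_zero]
      exact WeakCont.zero _
    · simp only [map_zero]
      exact WeakCont.zero _
  smul_mem' := by
    rintro c x ⟨h1, h2⟩
    constructor
    · simp only [map_smul]
      exact WeakCont.const_smul _ h1 c
    · simp only [map_smul]
      exact WeakCont.const_smul _ h2 c

theorem smulL_mem_sigmaWC {ρ : A ≃ₗᵢ[ℂ] (X →L[ℂ] ℂ)} {S : BanachAlgStr A}
    {M : BanachBimodule S E} (hA : IsDualBanachAlgebra ρ S) {x : E}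
    (hx : x ∈ sigmaWC ρ M) (a : A) : M.l a x ∈ sigmaWC ρ M := by
  obtain ⟨h1, h2⟩ := hx
  constructor
  · have he : (fun c => M.l c (M.l a x)) = fun c => M.l (S.mul c a) x :=
      funext fun c => (M.l_mul c a x).symm
    rw [he]
    exact @Continuous.comp A A E (wstar ρ) (wstar ρ) (weakTop E) _ _ h1 (hA.mul_right a)
  · have he : (fun c => M.r c (M.l a x)) = fun c => M.l a (M.r c x) :=
      funext fun c => (M.lr_comm a c x).symm
    rw [he]
    exact WeakCont.clm_comp _ (M.l a) h2

theorem smulR_mem_sigmaWC {ρ : A ≃ₗᵢ[ℂ] (X →L[ℂ] ℂ)} {S : BanachAlgStr A}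
    {M : BanachBimodule S E} (hA : IsDualBanachAlgebra ρ S) {x : E}
    (hx : x ∈ sigmaWC ρ M) (a : A) : M.r a x ∈ sigmaWC ρ M := by
  obtain ⟨h1, h2⟩ := hx
  constructor
  · have he : (fun c => M.l c (M.r a x)) = fun c => M.r a (M.l c x) :=
      funext fun c => M.lr_comm c a x
    rw [he]
    exact WeakCont.clm_comp _ (M.r a) h1
  · have he : (fun c => M.r c (M.r a x)) = fun c => M.r (S.mul a c) x :=
      funext fun c => (M.r_mul a c x).symm
    rw [he]
    exact @Continuous.comp A A E (wstar ρ) (wstar ρ) (weakTop E) _ _ h2 (hA.mul_left a)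

/-- `j_E : E* → σwc(E)*`, restriction of functionals (the adjoint of the inclusion
`σwc(E) ↪ E`). -/
def jmap (ρ : A ≃ₗᵢ[ℂ] (X →L[ℂ] ℂ)) {S : BanachAlgStr A} (M : BanachBimodule S E)
    (φ : E →L[ℂ] ℂ) : ↥(sigmaWC ρ M) →L[ℂ] ℂ :=
  φ.comp (sigmaWC ρ M).subtypeL

/-- The left dual action of `A` on `σwc(E)*`: `(a · Λ)(x) = Λ(x · a)`. -/
def dualL {ρ : A ≃ₗᵢ[ℂ] (X →L[ℂ] ℂ)} {S : BanachAlgStr A} {M : BanachBimodule S E}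
    (hA : IsDualBanachAlgebra ρ S) (a : A) (Λ : ↥(sigmaWC ρ M) →L[ℂ] ℂ) :
    ↥(sigmaWC ρ M) →L[ℂ] ℂ :=
  Λ.comp (ContinuousLinearMap.codRestrict ((M.r a).comp (sigmaWC ρ M).subtypeL)
    (sigmaWC ρ M) fun x => smulR_mem_sigmaWC hA x.2 a)

/-- The right dual action of `A` on `σwc(E)*`: `(Λ · a)(x) = Λ(a · x)`. -/
def dualR {ρ : A ≃ₗᵢ[ℂ] (X →L[ℂ] ℂ)} {S : BanachAlgStr A} {M : BanachBimodule S E}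
    (hA : IsDualBanachAlgebra ρ S) (a : A) (Λ : ↥(sigmaWC ρ M) →L[ℂ] ℂ) :
    ↥(sigmaWC ρ M) →L[ℂ] ℂ :=
  Λ.comp (ContinuousLinearMap.codRestrict ((M.l a).comp (sigmaWC ρ M).subtypeL)
    (sigmaWC ρ M) fun x => smulL_mem_sigmaWC hA x.2 a)

/-- `D : A → E*` is a derivation for the dual bimodule actions of `A` on `E*`,
i.e. `D(ab) = a · D(b) + D(a) · b`, where `(a · φ)(x) = φ(x · a)` and
`(φ · a)(x) = φ(a · x)`. -/
def IsDerivationToDual (S : BanachAlgStr A) (M : BanachBimodule S E)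
    (D : A →L[ℂ] (E →L[ℂ] ℂ)) : Prop :=
  ∀ a b, D (S.mul a b) = (D b).comp (M.r a) + (D a).comp (M.l b)

/-- `D : A → E` is a derivation for the bimodule actions of `A` on `E`:
`D(ab) = a · D(b) + D(a) · b`. -/
def IsDerivationInto (S : BanachAlgStr A) (M : BanachBimodule S E)
    (D : A →L[ℂ] E) : Prop :=
  ∀ a b, D (S.mul a b) = M.l a (D b) + M.r b (D a)

/-- The dual Banach algebra `(A, ρ, S)` is weakly Connes amenable: for every derivation
`D : A → A*` such that `j_A ∘ D : A → σwc(A)*` is weak-*–weak-* continuous, the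
derivation `j_A ∘ D` is inner, i.e. of the form `a ↦ a · Φ - Φ · a` for some
`Φ ∈ σwc(A)*`. -/
def WeaklyConnesAmenable (ρ : A ≃ₗᵢ[ℂ] (X →L[ℂ] ℂ)) (S : BanachAlgStr A)
    (hA : IsDualBanachAlgebra ρ S) : Prop :=
  ∀ D : A →L[ℂ] (A →L[ℂ] ℂ), IsDerivationToDual S S.toBimodule D →
    Continuous[wstar ρ, wstarD ↥(sigmaWC ρ S.toBimodule)]
      (fun a => jmap ρ S.toBimodule (D a)) →
    ∃ Φ, ∀ a, jmap ρ S.toBimodule (D a) = dualL hA a Φ - dualR hA a Φ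

end Core

section Vf

/-- The Banach algebra `V_f`: `V = X*` equipped with the product `a * b := f(a) • b`,
where `f` is the (`w*`-continuous, norm at most one) functional of evaluation at a point
`x₀ ∈ X` with `‖x₀‖ ≤ 1`. -/
def VfStr (X : Type u) [NormedAddCommGroup X] [NormedSpace ℂ X] (x₀ : X)
    (h : ‖x₀‖ ≤ 1) : BanachAlgStr (X →L[ℂ] ℂ) where
  mul := (NormedSpace.inclusionInDoubleDual ℂ X x₀).smulRight
    (ContinuousLinearMap.id ℂ (X →L[ℂ] ℂ))
  mul_assoc := by
    intro a b c
    simp [ContinuousLinearMap.smulRight_apply, ContinuousLinearMap.smul_apply,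
      NormedSpace.dual_def, smul_smul, mul_comm]
  norm_mul_le := by
    intro a b
    have he : ((NormedSpace.inclusionInDoubleDual ℂ X x₀).smulRight
        (ContinuousLinearMap.id ℂ (X →L[ℂ] ℂ))) a b = a x₀ • b := by
      simp [NormedSpace.dual_def]
    rw [he]
    calc ‖a x₀ • b‖ ≤ ‖a x₀‖ * ‖b‖ := ContinuousLinearMap.opNorm_smul_le _ _
      _ ≤ (‖a‖ * ‖x₀‖) * ‖b‖ :=
          mul_le_mul_of_nonneg_right (a.le_opNorm x₀) (norm_nonneg b)
      _ ≤ ‖a‖ * ‖b‖ :=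
          mul_le_mul_of_nonneg_right (mul_le_of_le_one_right (norm_nonneg a) h)
            (norm_nonneg b)

theorem VfStr_mul_apply {X : Type u} [NormedAddCommGroup X] [NormedSpace ℂ X] {x₀ : X}
    {h : ‖x₀‖ ≤ 1} (a b : X →L[ℂ] ℂ) : (VfStr X x₀ h).mul a b = a x₀ • b := by
  simp [VfStr, NormedSpace.dual_def]

end Vf

/-! Choose `e ∈ V` with `e(x₀) = 1`. Evaluating the derivation identity
`D(ab)(y) = D(b)(ya) + D(a)(by)` of `V_f` at `y = e` gives
`D(b)(a) = f(a) ψ(b) - f(b) ψ(a)` with `ψ = D(·)(e)`, i.e. `D = ad_ψ` is already inner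
into `V*`. Restriction to `σwc(V)` intertwines the dual actions, so `j ∘ D` is inner too. -/

section Inner

variable {A X E : Type u} [NormedAddCommGroup A] [NormedSpace ℂ A]
  [NormedAddCommGroup X] [NormedSpace ℂ X] [NormedAddCommGroup E] [NormedSpace ℂ E]
  {S : BanachAlgStr A}

def IsInnerToDual (M : BanachBimodule S E) (D : A →L[ℂ] (E →L[ℂ] ℂ)) : Prop :=
  ∃ ψ : E →L[ℂ] ℂ, ∀ a, D a = ψ.comp (M.r a) - ψ.comp (M.l a)

variable {ρ : A ≃ₗᵢ[ℂ] (X →L[ℂ] ℂ)} {M : BanachBimodule S E}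

theorem jmap_sub (φ χ : E →L[ℂ] ℂ) : jmap ρ M (φ - χ) = jmap ρ M φ - jmap ρ M χ :=
  ContinuousLinearMap.sub_comp _ _ _

theorem jmap_comp_r (hA : IsDualBanachAlgebra ρ S) (φ : E →L[ℂ] ℂ) (a : A) :
    jmap ρ M (φ.comp (M.r a)) = dualL hA a (jmap ρ M φ) :=
  rfl

theorem jmap_comp_l (hA : IsDualBanachAlgebra ρ S) (φ : E →L[ℂ] ℂ) (a : A) :
    jmap ρ M (φ.comp (M.l a)) = dualR hA a (jmap ρ M φ) :=
  rfl

theorem weaklyConnesAmenable_of_isInnerToDual (hA : IsDualBanachAlgebra ρ S)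
    (hinner : ∀ D, IsDerivationToDual S S.toBimodule D → IsInnerToDual S.toBimodule D) :
    WeaklyConnesAmenable ρ S hA := by
  intro D hD _
  obtain ⟨ψ, hψ⟩ := hinner D hD
  refine ⟨jmap ρ S.toBimodule ψ, fun a => ?_⟩
  rw [hψ, jmap_sub, jmap_comp_r hA, jmap_comp_l hA]

end Inner

section Vf

variable {X : Type u} [NormedAddCommGroup X] [NormedSpace ℂ X] {x₀ : X} {hn : ‖x₀‖ ≤ 1}

theorem VfStr_toBimodule_l_apply (a y : X →L[ℂ] ℂ) :
    (VfStr X x₀ hn).toBimodule.l a y = a x₀ • y :=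
  VfStr_mul_apply (h := hn) a y

theorem VfStr_toBimodule_r_apply (a y : X →L[ℂ] ℂ) :
    (VfStr X x₀ hn).toBimodule.r a y = y x₀ • a :=
  VfStr_mul_apply (h := hn) y a

theorem VfStr_derivation_apply {D : (X →L[ℂ] ℂ) →L[ℂ] ((X →L[ℂ] ℂ) →L[ℂ] ℂ)}
    (hD : IsDerivationToDual (VfStr X x₀ hn) (VfStr X x₀ hn).toBimodule D)
    {e : X →L[ℂ] ℂ} (he : e x₀ = 1) (a b : X →L[ℂ] ℂ) :
    D b a = a x₀ * D b e - b x₀ * D a e := by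
  have h := congrArg (fun φ => φ e) (hD a b)
  simp only [VfStr_mul_apply, add_apply, ContinuousLinearMap.comp_apply,
    VfStr_toBimodule_l_apply, VfStr_toBimodule_r_apply, map_smul,
    smul_apply, he, one_smul, smul_eq_mul] at h
  linear_combination -h

theorem VfStr_isInnerToDual (hx₀ : x₀ ≠ 0)
    {D : (X →L[ℂ] ℂ) →L[ℂ] ((X →L[ℂ] ℂ) →L[ℂ] ℂ)}
    (hD : IsDerivationToDual (VfStr X x₀ hn) (VfStr X x₀ hn).toBimodule D) :
    IsInnerToDual (VfStr X x₀ hn).toBimodule D := by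
  obtain ⟨e, he⟩ := SeparatingDual.exists_eq_one (R := ℂ) hx₀
  refine ⟨D.flip e, fun a => ContinuousLinearMap.ext fun y => ?_⟩
  simp only [sub_apply, ContinuousLinearMap.comp_apply,
    VfStr_toBimodule_l_apply, VfStr_toBimodule_r_apply, map_smul,
    ContinuousLinearMap.flip_apply, smul_eq_mul]
  exact VfStr_derivation_apply hD he y a

end Vf

theorem Vf_weaklyConnesAmenable_general {X : Type u} [NormedAddCommGroup X] [NormedSpace ℂ X]
    (x₀ : X) (hx₀ : x₀ ≠ 0) (hn : ‖x₀‖ ≤ 1)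
    (hA : IsDualBanachAlgebra (LinearIsometryEquiv.refl ℂ (X →L[ℂ] ℂ))
      (VfStr X x₀ hn)) :
    WeaklyConnesAmenable (LinearIsometryEquiv.refl ℂ (X →L[ℂ] ℂ)) (VfStr X x₀ hn) hA :=
  weaklyConnesAmenable_of_isInnerToDual hA fun _ hD => VfStr_isInnerToDual hx₀ hD

/-- **Proposition 4.6 (iv).** Let `X` be a complex Banach space, `V = X*` with
`dim V ≥ 2`, and let `f` be the evaluation at a nonzero `x₀ ∈ X` with `‖x₀‖ ≤ 1`.  The
dual Banach algebra `V_f` (product `a b = f(a) • b`, predual `X`) is weakly Connes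
amenable. -/
theorem Vf_weaklyConnesAmenable {X : Type u} [NormedAddCommGroup X] [NormedSpace ℂ X]
    [CompleteSpace X] (x₀ : X) (hx₀ : x₀ ≠ 0) (hn : ‖x₀‖ ≤ 1)
    (hdim : 2 ≤ Module.rank ℂ (X →L[ℂ] ℂ))
    (hA : IsDualBanachAlgebra (LinearIsometryEquiv.refl ℂ (X →L[ℂ] ℂ))
      (VfStr X x₀ hn)) :
    WeaklyConnesAmenable (LinearIsometryEquiv.refl ℂ (X →L[ℂ] ℂ)) (VfStr X x₀ hn) hA :=
  Vf_weaklyConnesAmenable_general x₀ hx₀ hn hA
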